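/- arXiv:1511.04978 — 6 statements merged into one kernel-verified Lean document; each statement's English description precedes it below -/
import Mathlib

section
/- Let B = ⟨a, b ∣ a b a⁻¹ b = 1⟩ be the Klein bottle group. Then the map ℤ × ℤ → B sending (i, j) to aⁱ bʲ is a bijection; that is, every element of B can be written uniquely in the form aⁱ bʲ with i, j ∈ ℤ. -/
/-- The single relator `a * b * a⁻¹ * b` of the Klein bottle group,
where `a = FreeGroup.of 0` and `b = FreeGroup.of 1`. -/
def kleinBottleRels : Set (FreeGroup (Fin 2)) :=
  {FreeGroup.of 0 * FreeGroup.of 1 * (FreeGroup.of 0)⁻¹ * FreeGroup.of 1}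

/-- The Klein bottle group `B = ⟨a, b ∣ a b a⁻¹ b = 1⟩`. -/
abbrev KleinBottleGroup : Type := PresentedGroup kleinBottleRels

/-- The generator `a` of the Klein bottle group. -/
def kleinA : KleinBottleGroup := PresentedGroup.of 0

/-- The generator `b` of the Klein bottle group. -/
def kleinB : KleinBottleGroup := PresentedGroup.of 1

/-!
Conjugation by `a` inverts `b`, so `b ^ j * a ^ i = a ^ i * b ^ ((-1) ^ i * j)`: any word in
`a` and `b` can be rewritten as `a ^ i * b ^ j`. For uniqueness, `i` is read off through the
homomorphism `B → ℤ` with `a ↦ 1`, `b ↦ 0`; then `j` is determined because `b` has infinite order,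
as its image under `a ↦ s`, `b ↦ r` in the infinite dihedral group is the translation `r`.
-/

section

variable {G : Type*} [Group G] {a b : G}

theorem MulAut.conj_apply_zpow_of_conj_eq_inv (h : a * b * a⁻¹ = b⁻¹) (j : ℤ) :
    MulAut.conj a (b ^ j) = b ^ (-j) := by
  rw [map_zpow, MulAut.conj_apply, h, inv_zpow, zpow_neg]

theorem MulAut.conj_zpow_apply_zpow_of_conj_eq_inv (h : a * b * a⁻¹ = b⁻¹) (i j : ℤ) :
    (MulAut.conj a ^ i) (b ^ j) = b ^ ((i.negOnePow : ℤ) * j) := by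
  induction i using Int.induction_on generalizing j with
  | zero => simp
  | succ i ih =>
    rw [zpow_add_one, MulAut.mul_apply, conj_apply_zpow_of_conj_eq_inv h, ih,
      Int.negOnePow_succ]
    simp
  | pred i ih =>
    have hinv : (MulAut.conj a)⁻¹ (b ^ j) = b ^ (-j) := by
      rw [MulAut.inv_apply, MulEquiv.symm_apply_eq, conj_apply_zpow_of_conj_eq_inv h, neg_neg]
    rw [zpow_sub_one, MulAut.mul_apply, hinv, ih, Int.negOnePow_sub, Int.negOnePow_one]
    simp

theorem zpow_mul_zpow_eq_zpow_mul_zpow_of_conj_eq_inv (h : a * b * a⁻¹ = b⁻¹) (i j : ℤ) :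
    b ^ j * a ^ i = a ^ i * b ^ ((i.negOnePow : ℤ) * j) := by
  calc b ^ j * a ^ i = a ^ i * MulAut.conj (a ^ (-i)) (b ^ j) := by
        rw [MulAut.conj_apply]; group
    _ = a ^ i * b ^ ((i.negOnePow : ℤ) * j) := by
      rw [map_zpow MulAut.conj, MulAut.conj_zpow_apply_zpow_of_conj_eq_inv h, Int.negOnePow_neg]

theorem surjective_zpow_mul_zpow_of_conj_eq_inv (h : a * b * a⁻¹ = b⁻¹)
    (hab : Subgroup.closure {a, b} = ⊤) :
    Function.Surjective (fun p : ℤ × ℤ => a ^ p.1 * b ^ p.2) := by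
  have mul_left_zpow (e i j : ℤ) :
      b ^ e * (a ^ i * b ^ j) = a ^ i * b ^ ((i.negOnePow : ℤ) * e + j) := by
    rw [← mul_assoc, zpow_mul_zpow_eq_zpow_mul_zpow_of_conj_eq_inv h, mul_assoc, ← zpow_add]
  intro g
  induction (hab ▸ Subgroup.mem_top g : g ∈ Subgroup.closure {a, b}) using
    Subgroup.closure_induction_left with
  | one => exact ⟨(0, 0), by simp⟩
  | mul_left x hx y _ ih =>
    obtain ⟨⟨i, j⟩, rfl⟩ := ih
    rcases hx with rfl | rfl
    · exact ⟨(1 + i, j), by simp [zpow_add, mul_assoc]⟩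
    · exact ⟨(i, _), by simpa using (mul_left_zpow 1 i j).symm⟩
  | inv_mul_cancel x hx y _ ih =>
    obtain ⟨⟨i, j⟩, rfl⟩ := ih
    rcases hx with rfl | rfl
    · exact ⟨(-1 + i, j), by simp [zpow_add, mul_assoc]⟩
    · exact ⟨(i, _), by simpa using (mul_left_zpow (-1) i j).symm⟩

theorem injective_zpow_mul_zpow_of_map_eq_one {H : Type*} [Group H] (φ : G →* H)
    (hφb : φ b = 1) (ha : ¬IsOfFinOrder (φ a)) (hb : ¬IsOfFinOrder b) :
    Function.Injective (fun p : ℤ × ℤ => a ^ p.1 * b ^ p.2) := by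
  rintro ⟨i, j⟩ ⟨k, l⟩ h
  obtain rfl : i = k := by
    apply injective_zpow_iff_not_isOfFinOrder.mpr ha
    simpa [hφb] using congrArg φ h
  simp only [Prod.mk.injEq, true_and]
  exact injective_zpow_iff_not_isOfFinOrder.mpr hb (mul_left_cancel h)

end

namespace KleinBottleGroup

variable {G : Type*} [Group G] {x y : G}

def lift (h : x * y * x⁻¹ * y = 1) : KleinBottleGroup →* G :=
  PresentedGroup.toGroup (f := ![x, y]) (by simpa [kleinBottleRels] using h)

@[simp] theorem lift_kleinA (h : x * y * x⁻¹ * y = 1) : lift h kleinA = x :=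
  PresentedGroup.toGroup.of _

@[simp] theorem lift_kleinB (h : x * y * x⁻¹ * y = 1) : lift h kleinB = y :=
  PresentedGroup.toGroup.of _

end KleinBottleGroup

theorem kleinA_mul_kleinB_mul_kleinA_inv : kleinA * kleinB * kleinA⁻¹ = kleinB⁻¹ :=
  mul_eq_one_iff_eq_inv.mp <| by
    simpa only [map_mul, map_inv, kleinA, kleinB, PresentedGroup.of] using
      PresentedGroup.one_of_mem (rels := kleinBottleRels) (Set.mem_singleton _)

theorem closure_kleinA_kleinB : Subgroup.closure {kleinA, kleinB} = ⊤ := by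
  rw [← PresentedGroup.closure_range_of]
  congr 1
  ext
  simp [Fin.exists_fin_two, kleinA, kleinB, eq_comm]

theorem not_isOfFinOrder_kleinB : ¬IsOfFinOrder kleinB := by
  have h : DihedralGroup.sr 0 * DihedralGroup.r 1 * (DihedralGroup.sr 0)⁻¹ * DihedralGroup.r 1
      = (1 : DihedralGroup 0) := by
    simp
  intro hfin
  have hr := (KleinBottleGroup.lift h).isOfFinOrder hfin
  rw [KleinBottleGroup.lift_kleinB] at hr
  exact orderOf_eq_zero_iff.mp DihedralGroup.orderOf_r_one hr

/-- Every element of the Klein bottle group can be written uniquely as `a ^ i * b ^ j`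
with `i, j : ℤ`. -/
theorem kleinBottle_normal_form :
    Function.Bijective (fun p : ℤ × ℤ => kleinA ^ p.1 * kleinB ^ p.2) := by
  have h : Multiplicative.ofAdd (1 : ℤ) * 1 * (Multiplicative.ofAdd 1)⁻¹ * 1 = 1 := by simp
  constructor
  · refine injective_zpow_mul_zpow_of_map_eq_one (KleinBottleGroup.lift h)
      (KleinBottleGroup.lift_kleinB h) ?_ not_isOfFinOrder_kleinB
    rw [KleinBottleGroup.lift_kleinA, isOfFinOrder_iff_eq_one]
    decide
  · exact surjective_zpow_mul_zpow_of_conj_eq_inv kleinA_mul_kleinB_mul_kleinA_inv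
      closure_kleinA_kleinB
end

section
/- Let B = ⟨a, b ∣ a b a⁻¹ b = 1⟩ be the Klein bottle group. Then every automorphism φ of B satisfies φ(b) = b or φ(b) = b⁻¹. -/
theorem MonoidHom.eq_one_of_mul_mul_inv_eq_inv {G : Type*} [Group G]
    (f : G →* Multiplicative ℤ) {c x : G} (h : c * x * c⁻¹ = x⁻¹) : f x = 1 := by
  have hfx : f x = (f x)⁻¹ := by simpa using congrArg f h
  have hneg : (f x).toAdd = -(f x).toAdd := congrArg Multiplicative.toAdd hfx
  exact Multiplicative.toAdd.injective (by simp only [toAdd_one]; omega)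

namespace KleinBottleGroup

theorem kleinA_mul_kleinB_mul_inv : kleinA * kleinB * kleinA⁻¹ = kleinB⁻¹ := by
  have h := PresentedGroup.one_of_mem (rels := kleinBottleRels) rfl
  simp only [map_mul, map_inv] at h
  exact eq_inv_of_mul_eq_one_left h

def aExponent : KleinBottleGroup →* Multiplicative ℤ :=
  PresentedGroup.toGroup (f := ![Multiplicative.ofAdd 1, 1]) <| by
    rintro r rfl
    simp

theorem aExponent_kleinA : aExponent kleinA = Multiplicative.ofAdd 1 :=
  PresentedGroup.toGroup.of _

theorem aExponent_kleinB : aExponent kleinB = 1 :=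
  PresentedGroup.toGroup.of _

def toPermInt : KleinBottleGroup →* Equiv.Perm ℤ :=
  PresentedGroup.toGroup (f := ![Equiv.neg ℤ, Equiv.addRight 1]) <| by
    rintro r rfl
    ext x
    simp

theorem toPermInt_kleinB : toPermInt kleinB = Equiv.addRight 1 :=
  PresentedGroup.toGroup.of _

theorem kleinB_zpow_injective : Function.Injective (kleinB ^ · : ℤ → KleinBottleGroup) := by
  intro i j hij
  simpa [toPermInt_kleinB] using congrArg (fun g => toPermInt g 0) hij

instance zpowers_kleinB_normal : (Subgroup.zpowers kleinB).Normal := by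
  rw [← Subgroup.normalizer_eq_top_iff, eq_top_iff]
  refine fun x _ => PresentedGroup.generated_by _ _ (fun i => ?_) x
  fin_cases i
  · rw [Subgroup.mem_normalizer_iff_map_conj_eq, MonoidHom.map_zpowers]
    show Subgroup.zpowers (kleinA * kleinB * kleinA⁻¹) = _
    rw [kleinA_mul_kleinB_mul_inv, Subgroup.zpowers_inv]
  · exact Subgroup.le_normalizer (Subgroup.mem_zpowers kleinB)

theorem exists_eq_kleinA_zpow_mul_kleinB_zpow (x : KleinBottleGroup) :
    ∃ m n : ℤ, kleinA ^ m * kleinB ^ n = x := by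
  have hx : x ∈ Subgroup.zpowers kleinA ⊔ Subgroup.zpowers kleinB := by
    refine PresentedGroup.generated_by _ _ (fun i => ?_) x
    fin_cases i
    · exact Subgroup.mem_sup_left (Subgroup.mem_zpowers kleinA)
    · exact Subgroup.mem_sup_right (Subgroup.mem_zpowers kleinB)
  obtain ⟨_, ⟨m, rfl⟩, _, ⟨n, rfl⟩, rfl⟩ := Subgroup.mem_sup_of_normal_right.mp hx
  exact ⟨m, n, rfl⟩

theorem mem_zpowers_kleinB_of_aExponent_eq_one {x : KleinBottleGroup} (hx : aExponent x = 1) :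
    x ∈ Subgroup.zpowers kleinB := by
  obtain ⟨m, n, rfl⟩ := exists_eq_kleinA_zpow_mul_kleinB_zpow x
  have hm : m = 0 := by
    simpa [aExponent_kleinA, aExponent_kleinB, ← ofAdd_zsmul] using hx
  simp [hm]

theorem exists_map_kleinB_eq_zpow (φ : KleinBottleGroup ≃* KleinBottleGroup) :
    ∃ n : ℤ, kleinB ^ n = φ kleinB := by
  refine mem_zpowers_kleinB_of_aExponent_eq_one
    (aExponent.eq_one_of_mul_mul_inv_eq_inv (c := φ kleinA) ?_)
  simpa using congrArg φ kleinA_mul_kleinB_mul_inv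

end KleinBottleGroup

/-- Every automorphism of the Klein bottle group sends `b` to `b` or `b⁻¹`. -/
theorem kleinBottle_aut_b (φ : KleinBottleGroup ≃* KleinBottleGroup) :
    φ kleinB = kleinB ∨ φ kleinB = kleinB⁻¹ := by
  obtain ⟨n, hn⟩ := KleinBottleGroup.exists_map_kleinB_eq_zpow φ
  obtain ⟨k, hk⟩ := KleinBottleGroup.exists_map_kleinB_eq_zpow φ.symm
  have hnk : n * k = 1 := KleinBottleGroup.kleinB_zpow_injective <| by
    calc kleinB ^ (n * k) = φ (kleinB ^ k) := by rw [zpow_mul, hn, map_zpow]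
      _ = kleinB ^ (1 : ℤ) := by rw [hk, φ.apply_symm_apply, zpow_one]
  rcases Int.eq_one_or_neg_one_of_mul_eq_one hnk with rfl | rfl
  · exact .inl (by rw [← hn, zpow_one])
  · exact .inr (by rw [← hn, zpow_neg_one])
end

section
/- Let B = ⟨a, b ∣ a b a⁻¹ b = 1⟩ be the Klein bottle group. Then every automorphism φ of B satisfies φ(a²) = a² or φ(a²) = a⁻². -/
/-!
The Klein bottle group is the semidirect product `ℤ ⋊ ℤ` in which the generator of the right
factor acts on the left one by negation, with `a` the generator of the right factor and `b` that
of the left one. In this model the center is computed by hand: it is the infinite cyclic group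
generated by `a ^ 2`. Automorphisms preserve the center, and an automorphism of an infinite
cyclic group sends a generator to itself or to its inverse.
-/

open Subgroup Multiplicative SemidirectProduct

section

variable {G : Type*} [Group G]

theorem Subgroup.map_center_equiv {H : Type*} [Group H] (e : G ≃* H) :
    (center G).map e.toMonoidHom = center H := by
  ext x
  exact mem_map_equiv.trans (MulEquivClass.apply_mem_center_iff e.symm)

theorem MulEquiv.apply_eq_or_eq_inv_of_center_eq_zpowers {g : G} (hg : ¬IsOfFinOrder g)
    (hc : center G = zpowers g) (φ : G ≃* G) : φ g = g ∨ φ g = g⁻¹ := by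
  have h : zpowers g = zpowers (φ g) := by
    rw [← hc, ← map_center_equiv φ, hc, MonoidHom.map_zpowers]
    rfl
  rcases (zpowers_eq_zpowers_iff hg).mp h with h | h
  · exact Or.inl h.symm
  · exact Or.inr h.symm

theorem MulAut.zpow_apply_of_apply_eq_inv {f : MulAut G} {x : G} (hf : f x = x⁻¹) (n : ℤ) :
    (f ^ n) x = x ^ (n.negOnePow : ℤ) := by
  have hf_inv : f⁻¹ x = x⁻¹ := by
    rw [MulAut.inv_apply, MulEquiv.symm_apply_eq, map_inv, hf, inv_inv]
  induction n using Int.induction_on with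
  | zero => simp
  | succ n ih =>
    rw [zpow_add_one, MulAut.mul_apply, hf, map_inv, ih, Int.negOnePow_succ, Units.val_neg,
      zpow_neg]
  | pred n ih =>
    rw [zpow_sub_one, MulAut.mul_apply, hf_inv, map_inv, ih, Int.negOnePow_sub,
      Int.negOnePow_one, mul_neg_one, Units.val_neg, zpow_neg]

end

def kleinAction : Multiplicative ℤ →* MulAut (Multiplicative ℤ) :=
  zpowersHom _ (MulEquiv.inv (Multiplicative ℤ))

theorem kleinAction_apply (g x : Multiplicative ℤ) :
    kleinAction g x = x ^ (g.toAdd.negOnePow : ℤ) :=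
  MulAut.zpow_apply_of_apply_eq_inv rfl _

abbrev KleinBottleModel : Type := Multiplicative ℤ ⋊[kleinAction] Multiplicative ℤ

theorem kleinBottleModel_center : center KleinBottleModel = zpowers (inr (ofAdd 2)) := by
  refine le_antisymm (fun w hw => ?_) (zpowers_le.mpr (mem_center_iff.mpr fun h => ?_))
  · -- Commuting with `inr 1` makes `w.left` its own inverse; commuting with `inl 1` makes
    -- `w.right` act trivially, i.e. be even.
    have ha := congrArg (toAdd ∘ left) (mem_center_iff.mp hw (inr (ofAdd 1)))
    have hb := congrArg (toAdd ∘ left) (mem_center_iff.mp hw (inl (ofAdd 1)))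
    simp only [Function.comp_apply, mul_left, left_inr, right_inr, kleinAction_apply, toAdd_ofAdd,
      Int.negOnePow_one, Units.val_neg, Units.val_one, Int.reduceNeg, zpow_neg, zpow_ofNat, pow_one,
      one_mul, toAdd_inv, mul_one, left_inl, right_inl, map_one, MulAut.one_apply,
      toAdd_mul, toAdd_zpow, Int.zsmul_eq_mul] at ha hb
    have h_left : w.left = 1 := toAdd_eq_zero.mp (by omega)
    obtain ⟨k, hk⟩ : Even w.right.toAdd := by
      rw [← Int.negOnePow_eq_one_iff, Units.ext_iff, Units.val_one]
      omega
    refine mem_zpowers_iff.mpr ⟨k, ?_⟩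
    rw [← inl_left_mul_inr_right w, h_left, map_one, one_mul, ← ofAdd_toAdd w.right, hk,
      ← map_zpow, ← ofAdd_zsmul, smul_eq_mul, mul_two]
  · ext <;> simp [kleinAction_apply, Int.negOnePow_even 2 even_two, add_comm]

namespace KleinBottleGroup

theorem conj_kleinA_kleinB : MulAut.conj kleinA kleinB = kleinB⁻¹ :=
  mul_eq_one_iff_eq_inv.mp (PresentedGroup.one_of_mem (Set.mem_singleton _))

def modelGen : Fin 2 → KleinBottleModel := ![inr (ofAdd 1), inl (ofAdd 1)]

theorem modelGen_rel : ∀ r ∈ kleinBottleRels, FreeGroup.lift modelGen r = 1 := by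
  rintro _ rfl
  ext <;> simp [modelGen, kleinAction_apply]

def toModel : KleinBottleGroup →* KleinBottleModel := PresentedGroup.toGroup modelGen_rel

theorem toModel_kleinA : toModel kleinA = inr (ofAdd 1) := PresentedGroup.toGroup.of _

theorem toModel_kleinB : toModel kleinB = inl (ofAdd 1) := PresentedGroup.toGroup.of _

def ofModel : KleinBottleModel →* KleinBottleGroup :=
  SemidirectProduct.lift (zpowersHom _ kleinB) (zpowersHom _ kleinA) fun g => by
    ext
    simp [kleinAction_apply, MulAut.zpow_apply_of_apply_eq_inv conj_kleinA_kleinB]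

theorem ofModel_comp_toModel : ofModel.comp toModel = MonoidHom.id _ := by
  refine PresentedGroup.ext fun i => ?_
  fin_cases i
  · change ofModel (toModel kleinA) = kleinA
    simp [ofModel, toModel_kleinA]
  · change ofModel (toModel kleinB) = kleinB
    simp [ofModel, toModel_kleinB]

theorem toModel_comp_ofModel : toModel.comp ofModel = MonoidHom.id _ := by
  refine hom_ext (MonoidHom.ext_mint ?_) (MonoidHom.ext_mint ?_)
  · simp [ofModel, toModel_kleinB]
  · simp [ofModel, toModel_kleinA]

def equivModel : KleinBottleGroup ≃* KleinBottleModel :=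
  toModel.toMulEquiv ofModel ofModel_comp_toModel toModel_comp_ofModel

theorem equivModel_kleinA_sq : equivModel (kleinA ^ 2) = inr (ofAdd 2) := by
  change toModel (kleinA ^ 2) = _
  rw [map_pow, toModel_kleinA, ← map_pow, ← ofAdd_nsmul]
  rfl

theorem center_eq_zpowers_kleinA_sq : center KleinBottleGroup = zpowers (kleinA ^ 2) := by
  rw [← map_center_equiv equivModel.symm, kleinBottleModel_center, MonoidHom.map_zpowers,
    ← equivModel_kleinA_sq]
  exact congrArg zpowers (equivModel.symm_apply_apply _)

theorem not_isOfFinOrder_kleinA_sq : ¬IsOfFinOrder (kleinA ^ 2) := by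
  rw [← orderOf_eq_zero_iff, ← MulEquiv.orderOf_eq equivModel, equivModel_kleinA_sq,
    orderOf_injective inr inr_injective, orderOf_eq_zero_iff, isOfFinOrder_iff_eq_one]
  decide

end KleinBottleGroup

/-- Every automorphism of the Klein bottle group sends `a ^ 2` to `a ^ 2` or `a ^ (-2)`. -/
theorem kleinBottle_aut_a_sq (φ : KleinBottleGroup ≃* KleinBottleGroup) :
    φ (kleinA ^ 2) = kleinA ^ 2 ∨ φ (kleinA ^ 2) = (kleinA ^ 2)⁻¹ :=
  φ.apply_eq_or_eq_inv_of_center_eq_zpowers KleinBottleGroup.not_isOfFinOrder_kleinA_sq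
    KleinBottleGroup.center_eq_zpowers_kleinA_sq
end

section
/- Let k ≥ 1 be an odd integer, let N_k = ⟨a₁, …, a_k ∣ a₁² a₂² ⋯ a_k² = 1⟩ be the fundamental group of the closed nonorientable surface of genus k, and let M ∈ GL(2, ℤ) with det M = −1. Let G_M = ℤ² ⋊_M ℤ be the semidirect product in which the generator of ℤ acts on ℤ² by M, and let p : G_M → ℤ be the projection onto the ℤ factor. Then there is no group homomorphism f : N_k → G_M such that p(f(aᵢ)) is odd for every i = 1, …, k. (This is the algebraic form of the statement that a closed surface of odd Euler characteristic admits no 2-sided map to a torus bundle over S¹ with monodromy M.) -/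
open Matrix

/-- The additive automorphism of `ℤ²` given by an invertible integer matrix. -/
def matrixAddAut (M : GL (Fin 2) ℤ) : (Fin 2 → ℤ) ≃+ (Fin 2 → ℤ) where
  toFun v := (M : Matrix (Fin 2) (Fin 2) ℤ).mulVec v
  invFun v := (↑M⁻¹ : Matrix (Fin 2) (Fin 2) ℤ).mulVec v
  left_inv v := by
    simp only [Matrix.mulVec_mulVec, ← Units.val_mul, inv_mul_cancel, Units.val_one,
      Matrix.one_mulVec]
  right_inv v := by
    simp only [Matrix.mulVec_mulVec, ← Units.val_mul, mul_inv_cancel, Units.val_one,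
      Matrix.one_mulVec]
  map_add' u v := by simp [Matrix.mulVec_add]

/-- The action of `ℤ` on `ℤ²` in which the generator `1` acts by the matrix `M`. -/
def torusBundleAction (M : GL (Fin 2) ℤ) :
    Multiplicative ℤ →* MulAut (Multiplicative (Fin 2 → ℤ)) :=
  zpowersHom _ (AddEquiv.toMultiplicative (matrixAddAut M))

/-- The fundamental group `G_M = ℤ² ⋊_M ℤ` of the torus bundle over `S¹` with
monodromy `M`. -/
abbrev TorusBundleGroup (M : GL (Fin 2) ℤ) : Type :=
  SemidirectProduct (Multiplicative (Fin 2 → ℤ)) (Multiplicative ℤ) (torusBundleAction M)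

/-- The projection `G_M → ℤ` onto the `ℤ` factor. -/
def torusBundleProj (M : GL (Fin 2) ℤ) (x : TorusBundleGroup M) : ℤ :=
  (SemidirectProduct.rightHom x).toAdd

/-- The single relator `a₁² a₂² ⋯ a_k²` of the fundamental group of the closed
nonorientable surface of genus `k`. -/
def nonorientableSurfaceRels (k : ℕ) : Set (FreeGroup (Fin k)) :=
  {(List.ofFn fun i : Fin k => (FreeGroup.of i) ^ 2).prod}

/-- The fundamental group `N_k = ⟨a₁, …, a_k ∣ a₁² a₂² ⋯ a_k² = 1⟩` of the closed
nonorientable surface of genus `k`. -/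
abbrev NonorientableSurfaceGroup (k : ℕ) : Type :=
  PresentedGroup (nonorientableSurfaceRels k)

/-!
Composing `f` with the projection `p` gives a homomorphism `N_k → ℤ`. The relator
`a₁² ⋯ a_k²` forces `2 · ∑ p(f aᵢ) = 0`, so `∑ p(f aᵢ) = 0` in the torsion-free group `ℤ`;
but a sum of an odd number of odd integers is odd.
-/

theorem Finset.odd_sum_of_odd {ι R : Type*} [Semiring R] {s : Finset ι} {f : ι → R}
    (hf : ∀ i ∈ s, Odd (f i)) (hs : Odd s.card) : Odd (∑ i ∈ s, f i) := by
  choose! g hg using hf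
  obtain ⟨m, hm⟩ := hs
  refine ⟨∑ i ∈ s, g i + m, ?_⟩
  calc ∑ i ∈ s, f i = ∑ i ∈ s, (2 * g i + 1) := Finset.sum_congr rfl hg
    _ = 2 * (∑ i ∈ s, g i + m) + 1 := by
      rw [Finset.sum_add_distrib, ← Finset.mul_sum, Finset.sum_const, hm, Nat.smul_one_eq_cast,
        Nat.cast_add, Nat.cast_mul, Nat.cast_ofNat, Nat.cast_one, mul_add, add_assoc]

namespace NonorientableSurfaceGroup

variable {k : ℕ}

theorem prod_of_sq_eq_one :
    (List.ofFn fun i : Fin k => (PresentedGroup.of i : NonorientableSurfaceGroup k) ^ 2).prod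
      = 1 := by
  have : PresentedGroup.mk (nonorientableSurfaceRels k)
      (List.ofFn fun i : Fin k => FreeGroup.of i ^ 2).prod = 1 :=
    (QuotientGroup.eq_one_iff _).mpr (Subgroup.subset_normalClosure rfl)
  rw [map_list_prod, List.map_ofFn] at this
  exact this

theorem prod_map_of_sq_eq_one {G : Type*} [CommGroup G] (φ : NonorientableSurfaceGroup k →* G) :
    (∏ i, φ (PresentedGroup.of i)) ^ 2 = 1 := by
  have := congrArg φ prod_of_sq_eq_one
  rw [map_list_prod, List.map_ofFn, map_one, List.prod_ofFn] at this
  simpa only [Function.comp_def, map_pow, Finset.prod_pow] using this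

theorem sum_toAdd_map_of_eq_zero (φ : NonorientableSurfaceGroup k →* Multiplicative ℤ) :
    ∑ i, (φ (PresentedGroup.of i)).toAdd = 0 := by
  have := congrArg Multiplicative.toAdd (prod_map_of_sq_eq_one φ)
  rw [toAdd_pow, toAdd_prod, toAdd_one] at this
  simpa using this

end NonorientableSurfaceGroup

theorem no_two_sided_map_of_odd_genus_general (k : ℕ) (hodd : Odd k)
    (M : GL (Fin 2) ℤ) :
    ¬ ∃ f : NonorientableSurfaceGroup k →* TorusBundleGroup M,
        ∀ i : Fin k, Odd (torusBundleProj M (f (PresentedGroup.of i))) := by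
  rintro ⟨f, hf⟩
  have hsum : ∑ i, torusBundleProj M (f (PresentedGroup.of i)) = 0 :=
    NonorientableSurfaceGroup.sum_toAdd_map_of_eq_zero (SemidirectProduct.rightHom.comp f)
  have hsum_odd : Odd (∑ i, torusBundleProj M (f (PresentedGroup.of i))) :=
    Finset.odd_sum_of_odd (fun i _ => hf i) (by rwa [Finset.card_univ, Fintype.card_fin])
  exact Int.not_odd_zero (hsum ▸ hsum_odd)

/-- If `k` is odd (so the closed nonorientable surface of genus `k` has odd Euler
characteristic) and `det M = -1`, there is no homomorphism `f : N_k → G_M` with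
`p (f aᵢ)` odd for every `i`; i.e. no 2-sided map from the surface to the torus
bundle with monodromy `M`. -/
theorem no_two_sided_map_of_odd_genus (k : ℕ) (hk : 1 ≤ k) (hodd : Odd k)
    (M : GL (Fin 2) ℤ) (hM : (M : Matrix (Fin 2) (Fin 2) ℤ).det = -1) :
    ¬ ∃ f : NonorientableSurfaceGroup k →* TorusBundleGroup M,
        ∀ i : Fin k, Odd (torusBundleProj M (f (PresentedGroup.of i))) :=
  no_two_sided_map_of_odd_genus_general k hodd M
end

section
/- Let r, s, t, u be integers with ru − st = 1 or ru − st = −1, and let G(r,s,t,u) = ⟨x₁, y₁, x₂, y₂ ∣ x₁y₁x₁⁻¹y₁ = 1, x₂y₂x₂⁻¹y₂ = 1, x₁² = x₂^{2r} y₂^{t}, y₁ = x₂^{2s} y₂^{u}⟩. Then the map ℤ × ℤ → G(r,s,t,u) sending (m, n) to x₂^{2m} y₂^{n} is an injective group homomorphism; in particular the subgroup generated by x₂² and y₂ is free abelian of rank 2. -/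
/-- The relators of the fundamental group of the orientable torus semi-bundle with
gluing matrix `((r, s), (t, u))`: with `x₁, y₁, x₂, y₂` the generators
`FreeGroup.of 0, …, FreeGroup.of 3`, the relators are `x₁y₁x₁⁻¹y₁`, `x₂y₂x₂⁻¹y₂`,
`x₁² (x₂^{2r} y₂^{t})⁻¹` and `y₁ (x₂^{2s} y₂^{u})⁻¹`. -/
def semiBundleRels (r s t u : ℤ) : Set (FreeGroup (Fin 4)) :=
  {FreeGroup.of 0 * FreeGroup.of 1 * (FreeGroup.of 0)⁻¹ * FreeGroup.of 1,
   FreeGroup.of 2 * FreeGroup.of 3 * (FreeGroup.of 2)⁻¹ * FreeGroup.of 3,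
   (FreeGroup.of 0) ^ 2 * ((FreeGroup.of 2) ^ (2 * r) * (FreeGroup.of 3) ^ t)⁻¹,
   FreeGroup.of 1 * ((FreeGroup.of 2) ^ (2 * s) * (FreeGroup.of 3) ^ u)⁻¹}

/-- The fundamental group `G(r,s,t,u)` of the orientable torus semi-bundle with
gluing matrix `((r, s), (t, u))`. -/
abbrev SemiBundleGroup (r s t u : ℤ) : Type := PresentedGroup (semiBundleRels r s t u)

/-- The generator `x₁` of `G(r,s,t,u)`. -/
def sbX₁ (r s t u : ℤ) : SemiBundleGroup r s t u := PresentedGroup.of 0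
/-- The generator `y₁` of `G(r,s,t,u)`. -/
def sbY₁ (r s t u : ℤ) : SemiBundleGroup r s t u := PresentedGroup.of 1
/-- The generator `x₂` of `G(r,s,t,u)`. -/
def sbX₂ (r s t u : ℤ) : SemiBundleGroup r s t u := PresentedGroup.of 2
/-- The generator `y₂` of `G(r,s,t,u)`. -/
def sbY₂ (r s t u : ℤ) : SemiBundleGroup r s t u := PresentedGroup.of 3

/-!
`G(r,s,t,u)` acts on `ℤ²`. The Klein bottle group `⟨x₂, y₂⟩` acts by the glide reflection
`(a, b) ↦ (a + 1, -b)` and the translation by `(0, 2)`, so `x₂^{2m} y₂^n` acts as the translation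
by `(2m, 2n)`, which determines `(m, n)`. The group `⟨x₁, y₁⟩` acts by the conjugates of these two
maps under the gluing matrix `P`, an automorphism of `ℤ²` since `ru - st = ±1`; conjugation by `P`
turns the translation by `v` into the translation by `P v`, which is what the two gluing relations
require (the factor `2` in `(0, 2)` is what makes them hold over `ℤ`). The homomorphism property
only uses that `x₂²` commutes with `y₂` in a Klein bottle group.
-/

section KleinBottle

variable {G : Type*} [Group G] {x y : G}

theorem commute_sq_of_mul_mul_inv_mul_eq_one (h : x * y * x⁻¹ * y = 1) : Commute (x ^ 2) y := by
  have hconj : x * y * x⁻¹ = y⁻¹ := eq_inv_of_mul_eq_one_left h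
  show x ^ 2 * y = y * x ^ 2
  calc x ^ 2 * y = x * (x * y * x⁻¹) * x := by rw [sq]; group
    _ = x * y⁻¹ * x := by rw [hconj]
    _ = (x * y * x⁻¹)⁻¹ * x * x := by group
    _ = y * x ^ 2 := by rw [hconj, inv_inv, mul_assoc, sq]

theorem Commute.zpow_add_mul_zpow_add (h : Commute x y) (m m' n n' : ℤ) :
    x ^ (m + m') * y ^ (n + n') = x ^ m * y ^ n * (x ^ m' * y ^ n') := by
  rw [zpow_add, zpow_add, mul_assoc, mul_assoc, ← mul_assoc (x ^ m'),
    (h.zpow_zpow m' n).eq, mul_assoc]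

end KleinBottle

theorem MulAut.conj_addRight {V : Type*} [AddGroup V] (e : V ≃+ V) (v : V) :
    MulAut.conj e.toEquiv (Equiv.addRight v) = Equiv.addRight (e v) := by
  ext p
  simp

namespace SemiBundleGroup

open Equiv

variable {r s t u : ℤ}

def glide : Perm (ℤ × ℤ) := Equiv.addRight (1, 0) * prodCongr (Equiv.refl ℤ) (Equiv.neg ℤ)

theorem glide_sq : glide ^ 2 = Equiv.addRight (2, 0) := by
  ext p
  · simp [glide, sq, add_assoc, one_add_one_eq_two]
  · simp [glide, sq]

theorem glide_mul_addRight_mul_inv_mul_addRight (b : ℤ) :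
    glide * Equiv.addRight (0, b) * glide⁻¹ * Equiv.addRight (0, b) = 1 := by
  ext p <;> simp [glide]

def gluingAut (r s t u : ℤ) (h : IsUnit (r * u - s * t)) : (ℤ × ℤ) ≃+ (ℤ × ℤ) where
  toFun p := (r * p.1 + s * p.2, t * p.1 + u * p.2)
  invFun p := ((r * u - s * t) * (u * p.1 - s * p.2), (r * u - s * t) * (r * p.2 - t * p.1))
  left_inv p := by
    ext
    · linear_combination p.1 * Int.isUnit_mul_self h
    · linear_combination p.2 * Int.isUnit_mul_self h
  right_inv p := by
    ext
    · linear_combination p.1 * Int.isUnit_mul_self h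
    · linear_combination p.2 * Int.isUnit_mul_self h
  map_add' p q := by
    ext <;> simp only [Prod.fst_add, Prod.snd_add] <;> ring

theorem glide_zpow_two_mul_mul_addRight_zpow (m n : ℤ) :
    glide ^ (2 * m) * Equiv.addRight (0, 2) ^ n = Equiv.addRight (2 * m, 2 * n) := by
  rw [zpow_mul, zpow_two, ← sq, glide_sq, zsmul_addRight, zsmul_addRight, ← addRight_add]
  ext p <;> simp [mul_comm]

theorem conj_gluingAut_addRight (h : IsUnit (r * u - s * t)) (a b : ℤ) :
    MulAut.conj (gluingAut r s t u h).toEquiv (Equiv.addRight (a, b)) =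
      Equiv.addRight (r * a + s * b, t * a + u * b) :=
  MulAut.conj_addRight _ _

def generatorImage (h : IsUnit (r * u - s * t)) : Fin 4 → Perm (ℤ × ℤ) :=
  let c := MulAut.conj (gluingAut r s t u h).toEquiv
  ![c glide, c (Equiv.addRight (0, 2)), glide, Equiv.addRight (0, 2)]

theorem lift_generatorImage_eq_one (h : IsUnit (r * u - s * t)) :
    ∀ w ∈ semiBundleRels r s t u, FreeGroup.lift (generatorImage h) w = 1 := by
  intro w hw
  simp only [semiBundleRels, Set.mem_insert_iff, Set.mem_singleton_iff] at hw
  rcases hw with rfl | rfl | rfl | rfl <;>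
    simp only [map_mul, map_inv, map_pow, map_zpow, FreeGroup.lift_apply_of, generatorImage,
      Matrix.cons_val_zero, Matrix.cons_val_one, Matrix.cons_val_two, Matrix.cons_val_three,
      Matrix.head_cons, Matrix.tail_cons]
  · rw [← map_inv, ← map_mul, ← map_mul, ← map_mul, glide_mul_addRight_mul_inv_mul_addRight,
      map_one]
  · exact glide_mul_addRight_mul_inv_mul_addRight 2
  · rw [← map_pow, glide_sq, conj_gluingAut_addRight, glide_zpow_two_mul_mul_addRight_zpow,
      mul_inv_eq_one]
    congr 1
    ext <;> ring
  · rw [conj_gluingAut_addRight, glide_zpow_two_mul_mul_addRight_zpow, mul_inv_eq_one]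
    congr 1
    ext <;> ring

def action (h : IsUnit (r * u - s * t)) : SemiBundleGroup r s t u →* Perm (ℤ × ℤ) :=
  PresentedGroup.toGroup (lift_generatorImage_eq_one h)

theorem action_sbX₂ (h : IsUnit (r * u - s * t)) : action h (sbX₂ r s t u) = glide :=
  PresentedGroup.toGroup.of (lift_generatorImage_eq_one h)

theorem action_sbY₂ (h : IsUnit (r * u - s * t)) :
    action h (sbY₂ r s t u) = Equiv.addRight (0, 2) :=
  PresentedGroup.toGroup.of (lift_generatorImage_eq_one h)

theorem action_peripheral (h : IsUnit (r * u - s * t)) (m n : ℤ) :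
    action h (sbX₂ r s t u ^ (2 * m) * sbY₂ r s t u ^ n) = Equiv.addRight (2 * m, 2 * n) := by
  rw [map_mul, map_zpow, map_zpow, action_sbX₂, action_sbY₂,
    glide_zpow_two_mul_mul_addRight_zpow]

theorem peripheral_injective (h : IsUnit (r * u - s * t)) :
    Function.Injective fun p : ℤ × ℤ => sbX₂ r s t u ^ (2 * p.1) * sbY₂ r s t u ^ p.2 := by
  intro p q hpq
  have hpq₀ := congrArg (fun g => action h g 0) hpq
  simp only [action_peripheral, Equiv.coe_addRight, zero_add, Prod.mk.injEq] at hpq₀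
  exact Prod.ext (by omega) (by omega)

theorem sbX₂_mul_sbY₂_mul_inv_mul_sbY₂ :
    sbX₂ r s t u * sbY₂ r s t u * (sbX₂ r s t u)⁻¹ * sbY₂ r s t u = 1 :=
  PresentedGroup.one_of_mem (by simp [semiBundleRels])

theorem peripheral_mul (p q : ℤ × ℤ) :
    sbX₂ r s t u ^ (2 * (p + q).1) * sbY₂ r s t u ^ (p + q).2
      = (sbX₂ r s t u ^ (2 * p.1) * sbY₂ r s t u ^ p.2)
          * (sbX₂ r s t u ^ (2 * q.1) * sbY₂ r s t u ^ q.2) := by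
  have hc := commute_sq_of_mul_mul_inv_mul_eq_one
    (sbX₂_mul_sbY₂_mul_inv_mul_sbY₂ (r := r) (s := s) (t := t) (u := u))
  rw [← zpow_ofNat] at hc
  simp only [zpow_mul, Prod.fst_add, Prod.snd_add]
  exact hc.zpow_add_mul_zpow_add _ _ _ _

end SemiBundleGroup

/-- The map `(m, n) ↦ x₂^{2m} y₂^{n}` is an injective group homomorphism from
`ℤ × ℤ` into `G(r,s,t,u)`; in particular the subgroup `⟨x₂², y₂⟩` is free abelian
of rank 2. -/
theorem semiBundle_peripheral_free_abelian (r s t u : ℤ)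
    (hdet : r * u - s * t = 1 ∨ r * u - s * t = -1) :
    Function.Injective
      (fun p : ℤ × ℤ => sbX₂ r s t u ^ (2 * p.1) * sbY₂ r s t u ^ p.2) ∧
    ∀ p q : ℤ × ℤ,
      sbX₂ r s t u ^ (2 * (p + q).1) * sbY₂ r s t u ^ (p + q).2
        = (sbX₂ r s t u ^ (2 * p.1) * sbY₂ r s t u ^ p.2)
            * (sbX₂ r s t u ^ (2 * q.1) * sbY₂ r s t u ^ q.2) :=
  ⟨SemiBundleGroup.peripheral_injective (Int.isUnit_iff.mpr hdet),
    SemiBundleGroup.peripheral_mul⟩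
end

section
/- Let g ≥ 2 and let S_g = ⟨a₁, b₁, …, a_g, b_g ∣ [a₁,b₁][a₂,b₂]⋯[a_g,b_g] = 1⟩ be the fundamental group of the closed orientable surface of genus g. Then the second derived subgroup of S_g (the commutator subgroup of the commutator subgroup of S_g) is nontrivial; equivalently, S_g is not metabelian, so the quotient map from S_g to its metabelianization S_g/S_g'' is not injective. -/
/-!
Killing every `bᵢ` turns the relator into a product of commutators `⁅σ, 1⁆ = 1`, so any choice
of images for the `aᵢ` defines a homomorphism. Sending `a₁ ↦ (0 1)` and the other `aᵢ` to the
4-cycle `(0 1 2 3)` gives a surjection `S_g → S₄`, as a transposition and an `n`-cycle through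
its two points generate `Sₙ`. Surjections map derived series onto derived series, and `S₄` is
not metabelian (`S₄'' = V₄`), hence `S_g'' ≠ 1`.
-/

open scoped commutatorElement

/-- The single relator `[a₁,b₁][a₂,b₂]⋯[a_g,b_g]` of the fundamental group of the
closed orientable surface of genus `g`; here `Sum.inl i` is the generator `aᵢ` and
`Sum.inr i` is the generator `bᵢ`. -/
def orientableSurfaceRels (g : ℕ) : Set (FreeGroup (Fin g ⊕ Fin g)) :=
  {(List.ofFn fun i : Fin g =>
      ⁅(FreeGroup.of (Sum.inl i) : FreeGroup (Fin g ⊕ Fin g)),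
        FreeGroup.of (Sum.inr i)⁆).prod}

/-- The fundamental group `S_g = ⟨a₁, b₁, …, a_g, b_g ∣ [a₁,b₁]⋯[a_g,b_g] = 1⟩` of
the closed orientable surface of genus `g`. -/
abbrev OrientableSurfaceGroup (g : ℕ) : Type :=
  PresentedGroup (orientableSurfaceRels g)

theorem derivedSeries_ne_bot_of_surjective {G H : Type*} [Group G] [Group H] {f : G →* H}
    (hf : Function.Surjective f) {n : ℕ} (hH : derivedSeries H n ≠ ⊥) :
    derivedSeries G n ≠ ⊥ := by
  intro hG
  rw [← map_derivedSeries_eq hf, hG, Subgroup.map_bot] at hH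
  exact hH rfl

theorem commutatorElement_commutatorElement_mem_derivedSeries_two {G : Type*} [Group G]
    (a b c d : G) : ⁅⁅a, b⁆, ⁅c, d⁆⁆ ∈ derivedSeries G 2 := by
  have mem_one (x y : G) : ⁅x, y⁆ ∈ derivedSeries G 1 := by
    rw [derivedSeries_one]
    exact Subgroup.commutator_mem_commutator (Subgroup.mem_top x) (Subgroup.mem_top y)
  rw [derivedSeries_succ]
  exact Subgroup.commutator_mem_commutator (mem_one a b) (mem_one c d)

namespace Equiv.Perm

theorem closure_swap_zero_one_finRotate (n : ℕ) :
    Subgroup.closure ({finRotate (n + 2), swap 0 1} : Set (Perm (Fin (n + 2)))) = ⊤ := by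
  simpa using closure_cycle_adjacent_swap isCycle_finRotate support_finRotate 0

set_option maxRecDepth 10000 in
theorem derivedSeries_fin_four_two_ne_bot : derivedSeries (Perm (Fin 4)) 2 ≠ ⊥ := by
  intro h
  have := commutatorElement_commutatorElement_mem_derivedSeries_two (swap (0 : Fin 4) 1)
    (finRotate 4) (swap 0 1 * finRotate 4) (finRotate 4 * swap 0 1)
  rw [h, Subgroup.mem_bot] at this
  revert this
  decide

end Equiv.Perm

namespace OrientableSurfaceGroup

variable {g : ℕ} {G : Type*} [Group G]

theorem lift_sumElim_one_eq_one (φ : Fin g → G) :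
    ∀ r ∈ orientableSurfaceRels g, FreeGroup.lift (Sum.elim φ 1) r = 1 := by
  rintro _ rfl
  rw [map_list_prod, List.map_ofFn]
  refine List.prod_eq_one fun z hz => ?_
  obtain ⟨i, rfl⟩ := List.mem_ofFn.mp hz
  simp

def liftA (φ : Fin g → G) : OrientableSurfaceGroup g →* G :=
  PresentedGroup.toGroup (lift_sumElim_one_eq_one φ)

theorem liftA_surjective {φ : Fin g → G} (hφ : Subgroup.closure (Set.range φ) = ⊤) :
    Function.Surjective (liftA φ) := by
  rw [← MonoidHom.range_eq_top, eq_top_iff, ← hφ, Subgroup.closure_le]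
  rintro _ ⟨i, rfl⟩
  exact ⟨PresentedGroup.of (Sum.inl i), PresentedGroup.toGroup.of _⟩

end OrientableSurfaceGroup

/-- For `g ≥ 2`, the second derived subgroup of the genus-`g` surface group is
nontrivial; equivalently `S_g` is not metabelian, so the quotient map onto the
metabelianization `S_g/S_g''` is not injective. -/
theorem surface_group_not_metabelian (g : ℕ) (hg : 2 ≤ g) :
    derivedSeries (OrientableSurfaceGroup g) 2 ≠ ⊥ := by
  obtain ⟨n, rfl⟩ := Nat.exists_eq_add_of_le' hg
  let φ : Fin (n + 2) → Equiv.Perm (Fin 4) := fun i =>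
    if i = 0 then Equiv.swap 0 1 else finRotate 4
  have hφ : Subgroup.closure (Set.range φ) = ⊤ := by
    refine eq_top_iff.mpr ((Equiv.Perm.closure_swap_zero_one_finRotate 2).ge.trans
      (Subgroup.closure_mono ?_))
    rintro _ (rfl | rfl)
    · exact ⟨1, by simp [φ]⟩
    · exact ⟨0, by simp [φ]⟩
  exact derivedSeries_ne_bot_of_surjective (OrientableSurfaceGroup.liftA_surjective hφ)
    Equiv.Perm.derivedSeries_fin_four_two_ne_bot
end
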